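/- For all sufficiently large n, |B_{≥k}| ≤ α^{1/2}·n and |C_{≥k}| ≤ α^{1/2}·n. -/

import Mathlib

open Real Filter
set_option maxHeartbeats 2000000

/-- `W = W(n) = exp(2^{-10} (log n · log log n)^{1/2})`. -/
noncomputable def Wp (n : ℕ) : ℝ :=
  Real.exp ((2 : ℝ) ^ (-10 : ℤ) * Real.sqrt (Real.log n * Real.log (Real.log n)))

/-- `k = k(n) = 2^{-5} (log n / log log n)^{1/2}`. -/
noncomputable def kp (n : ℕ) : ℝ :=
  (2 : ℝ) ^ (-5 : ℤ) * Real.sqrt (Real.log n / Real.log (Real.log n))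

/-- `α = α(n) = exp(−k log k)`. -/
noncomputable def ap (n : ℕ) : ℝ := Real.exp (-(kp n * Real.log (kp n)))

/-- `𝒫_W`: the set of primes `p ≤ W(n)`. -/
noncomputable def primesLe (n : ℕ) : Set ℕ := {p : ℕ | p.Prime ∧ (p : ℝ) ≤ Wp n}

/-- `𝒫'_W = 𝒫_W \ {2}`: the odd primes `p ≤ W(n)`. -/
noncomputable def primesLe' (n : ℕ) : Set ℕ := primesLe n \ {2}

/-- `[n]_o = {1, 3, …, 2n−1}`: the first `n` odd positive integers. -/
def oddSet (n : ℕ) : Set ℕ := {m : ℕ | Odd m ∧ m < 2 * n}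

/-- `B_S`: the set of `m ∈ {1,…,n}` whose set of prime divisors in `𝒫'_W` is exactly `S`. -/
noncomputable def BSet (n : ℕ) (S : Set ℕ) : Set ℕ :=
  {m : ℕ | 1 ≤ m ∧ m ≤ n ∧ ∀ p ∈ primesLe' n, (p ∣ m ↔ p ∈ S)}

/-- `C_S`: the set of `m ∈ [n]_o` whose set of prime divisors in `𝒫'_W` is exactly `S`. -/
noncomputable def CSet (n : ℕ) (S : Set ℕ) : Set ℕ :=
  {m : ℕ | m ∈ oddSet n ∧ ∀ p ∈ primesLe' n, (p ∣ m ↔ p ∈ S)}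

/-- `B_{≥k} = [n] \ ⋃_{S ⊆ 𝒫'_W, |S| < k} B_S`. -/
noncomputable def BgeK (n : ℕ) : Set ℕ :=
  {m : ℕ | 1 ≤ m ∧ m ≤ n} \
    ⋃ S ∈ {S : Set ℕ | S ⊆ primesLe' n ∧ (S.ncard : ℝ) < kp n}, BSet n S

/-- `C_{≥k} = [n]_o \ ⋃_{S ⊆ 𝒫'_W, |S| < k} C_S`. -/
noncomputable def CgeK (n : ℕ) : Set ℕ :=
  oddSet n \
    ⋃ S ∈ {S : Set ℕ | S ⊆ primesLe' n ∧ (S.ncard : ℝ) < kp n}, CSet n S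



lemma pow_add_aux (S x : ℝ) (hS : 0 ≤ S) (hx : 0 ≤ x) :
    ∀ K : ℕ, S ^ (K+1) + (K+1) * x * S ^ K ≤ (S + x) ^ (K+1) := by
  intro K
  induction K with
  | zero => norm_num
  | succ K ih =>
    have h2 : 0 ≤ S + x := by linarith
    have h3 : (S + x) * (S ^ (K+1) + (K+1) * x * S ^ K) ≤ (S + x) * (S + x) ^ (K+1) :=
      mul_le_mul_of_nonneg_left ih h2
    have hpow : 0 ≤ S ^ K := pow_nonneg hS K
    have e1 : S ^ (K+1) = S ^ K * S := pow_succ S K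
    have e3 : (S + x) ^ (K+1+1) = (S + x) * (S + x) ^ (K+1) := by ring
    rw [e3, pow_succ S (K+1), e1]
    rw [e1] at h3
    push_cast
    push_cast at h3
    nlinarith [mul_nonneg (mul_nonneg hx hx) hpow]

lemma esymm_bound (P : Finset ℕ) (x : ℕ → ℝ) (hx : ∀ p, 0 ≤ x p) :
    ∀ K : ℕ, (K.factorial : ℝ) * ∑ T ∈ P.powersetCard K, ∏ p ∈ T, x p
      ≤ (∑ p ∈ P, x p) ^ K := by
  induction P using Finset.induction_on with
  | empty =>
    intro K
    cases K with
    | zero => simp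
    | succ K =>
      rw [Finset.powersetCard_eq_empty.2 (by simp)]
      simp
  | insert a P ha ih =>
    intro K
    cases K with
    | zero => simp
    | succ K =>
      rw [Finset.powersetCard_succ_insert ha]
      have hdisj : Disjoint (P.powersetCard (K+1)) ((P.powersetCard K).image (insert a)) := by
        rw [Finset.disjoint_left]
        intro T hT hT'
        rw [Finset.mem_powersetCard] at hT
        obtain ⟨T', hT', rfl⟩ := Finset.mem_image.mp hT'
        exact ha (hT.1 (Finset.mem_insert_self a T'))
      rw [Finset.sum_union hdisj]
      have himg : ∑ T ∈ (P.powersetCard K).image (insert a), ∏ p ∈ T, x p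
          = x a * ∑ T ∈ P.powersetCard K, ∏ p ∈ T, x p := by
        rw [Finset.sum_image, Finset.mul_sum]
        · apply Finset.sum_congr rfl
          intro T hT
          rw [Finset.mem_powersetCard] at hT
          rw [Finset.prod_insert (fun h => ha (hT.1 h))]
        · intro T hT T' hT' h
          rw [Finset.mem_coe, Finset.mem_powersetCard] at hT hT'
          have haT : a ∉ T := fun h' => ha (hT.1 h')
          have haT' : a ∉ T' := fun h' => ha (hT'.1 h')
          have := congrArg (fun s => Finset.erase s a) h
          simpa [Finset.erase_insert haT, Finset.erase_insert haT'] using this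
      rw [himg, Finset.sum_insert ha]
      set S := ∑ p ∈ P, x p with hS
      have hSnn : 0 ≤ S := Finset.sum_nonneg fun p _ => hx p
      have hIH1 := ih (K+1)
      have hIH2 := ih K
      have hfac : ((K+1).factorial : ℝ) = (K+1) * K.factorial := by
        rw [Nat.factorial_succ]; push_cast; ring
      have key : ((K+1).factorial : ℝ) *
          (∑ T ∈ P.powersetCard (K+1), ∏ p ∈ T, x p
            + x a * ∑ T ∈ P.powersetCard K, ∏ p ∈ T, x p)
          ≤ S ^ (K+1) + (K+1) * x a * S ^ K := by
        rw [mul_add]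
        apply add_le_add hIH1
        rw [hfac]
        calc (K+1 : ℝ) * K.factorial * (x a * ∑ T ∈ P.powersetCard K, ∏ p ∈ T, x p)
            = (K+1) * x a * (K.factorial * ∑ T ∈ P.powersetCard K, ∏ p ∈ T, x p) := by ring
          _ ≤ (K+1) * x a * S ^ K := by
              exact mul_le_mul_of_nonneg_left hIH2
                (mul_nonneg (by positivity) (hx a))
      calc ((K+1).factorial : ℝ) *
          (∑ T ∈ P.powersetCard (K+1), ∏ p ∈ T, x p
            + x a * ∑ T ∈ P.powersetCard K, ∏ p ∈ T, x p)
          ≤ S ^ (K+1) + (K+1) * x a * S ^ K := key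
        _ ≤ (S + x a) ^ (K+1) := pow_add_aux S (x a) hSnn (hx a) K
        _ = (x a + S) ^ (K+1) := by ring


lemma pow_self_le_factorial_mul_exp : ∀ K : ℕ, (K : ℝ) ^ K ≤ K.factorial * Real.exp 1 ^ K := by
  intro K
  induction K with
  | zero => simp
  | succ K ih =>
    have h1 : ((K:ℝ)+1) ^ K ≤ Real.exp 1 * (K:ℝ) ^ K := by
      rcases Nat.eq_zero_or_pos K with hK | hK
      · have := Real.add_one_le_exp (1:ℝ)
        subst hK; norm_num
      · have hKpos : (0:ℝ) < K := by exact_mod_cast hK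
        have h2 : (1 + 1/(K:ℝ)) ≤ Real.exp (1/(K:ℝ)) := by
          have := Real.add_one_le_exp (1/(K:ℝ))
          linarith
        have h3 : (1 + 1/(K:ℝ)) ^ K ≤ Real.exp (1/(K:ℝ)) ^ K :=
          pow_le_pow_left₀ (by positivity) h2 K
        rw [← Real.exp_nat_mul] at h3
        have h4 : (K:ℝ) * (1/(K:ℝ)) = 1 := by field_simp
        rw [h4] at h3
        have h5 : ((K:ℝ)+1) ^ K = (1 + 1/(K:ℝ)) ^ K * (K:ℝ) ^ K := by
          rw [← mul_pow]; congr 1; field_simp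
        rw [h5]
        exact mul_le_mul_of_nonneg_right h3 (by positivity)
    push_cast
    calc ((K:ℝ)+1) ^ (K+1) = ((K:ℝ)+1) * ((K:ℝ)+1) ^ K := by ring
      _ ≤ ((K:ℝ)+1) * (Real.exp 1 * (K:ℝ) ^ K) :=
          mul_le_mul_of_nonneg_left h1 (by positivity)
      _ ≤ ((K:ℝ)+1) * (Real.exp 1 * (K.factorial * Real.exp 1 ^ K)) :=
          mul_le_mul_of_nonneg_left (mul_le_mul_of_nonneg_left ih (Real.exp_pos 1).le)
            (by positivity)
      _ = ((K+1).factorial : ℝ) * Real.exp 1 ^ (K+1) := by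
          rw [Nat.factorial_succ]; push_cast; ring


lemma block_card_mul_le (j : ℕ) :
    ((Finset.Ioc (2^j) (2^(j+1))).filter Nat.Prime).card * j ≤ 2^(j+2) := by
  set B := (Finset.Ioc (2^j) (2^(j+1))).filter Nat.Prime with hB
  have h1 : (2^j : ℕ) ^ B.card ≤ ∏ p ∈ B, p := by
    apply Finset.pow_card_le_prod
    intro p hp
    rw [hB, Finset.mem_filter, Finset.mem_Ioc] at hp
    exact hp.1.1.le
  have h2 : ∏ p ∈ B, p ≤ primorial (2^(j+1)) := by
    rw [primorial]
    apply Finset.prod_le_prod_of_subset_of_one_le'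
    · intro p hp
      rw [hB, Finset.mem_filter, Finset.mem_Ioc] at hp
      rw [Finset.mem_filter, Finset.mem_range]
      exact ⟨by omega, hp.2⟩
    · intro p hp _
      rw [Finset.mem_filter] at hp
      exact hp.2.one_lt.le
  have h3 : primorial (2^(j+1)) ≤ 4 ^ (2^(j+1)) := primorial_le_4_pow _
  have h4 : (2:ℕ) ^ (j * B.card) ≤ 2 ^ (2^(j+2)) := by
    calc (2:ℕ) ^ (j * B.card) = (2^j) ^ B.card := by rw [pow_mul]
      _ ≤ ∏ p ∈ B, p := h1
      _ ≤ 4 ^ (2^(j+1)) := h2.trans h3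
      _ = 2 ^ (2^(j+2)) := by
          rw [show (4:ℕ) = 2^2 by norm_num, ← pow_mul, pow_succ 2 (j+1)]
          ring_nf
  have h5 := (Nat.pow_le_pow_iff_right (le_refl 2)).mp h4
  rw [mul_comm]
  exact h5

lemma block_sum_le (j : ℕ) (hj : 1 ≤ j) :
    ∑ p ∈ (Finset.Ioc (2^j) (2^(j+1))).filter Nat.Prime, (1/p : ℝ) ≤ 4 / j := by
  set B := (Finset.Ioc (2^j) (2^(j+1))).filter Nat.Prime with hB
  have h1 : ∀ p ∈ B, (1/p : ℝ) ≤ 1/((2:ℝ)^j) := by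
    intro p hp
    rw [hB, Finset.mem_filter, Finset.mem_Ioc] at hp
    apply one_div_le_one_div_of_le
    · positivity
    · exact_mod_cast hp.1.1.le
  have hjr : (0:ℝ) < j := by exact_mod_cast hj
  have h2j : (0:ℝ) < 2^j := by positivity
  have hcr : (B.card : ℝ) * j ≤ 4 * 2^j := by
    have hc := block_card_mul_le j
    have : ((B.card * j : ℕ) : ℝ) ≤ ((2^(j+2) : ℕ) : ℝ) := by exact_mod_cast hc
    push_cast at this
    calc (B.card : ℝ) * j ≤ 2^(j+2) := this
      _ = 4 * 2^j := by ring
  calc ∑ p ∈ B, (1/p : ℝ) ≤ ∑ _p ∈ B, (1/((2:ℝ)^j)) := Finset.sum_le_sum h1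
    _ = B.card * (1/((2:ℝ)^j)) := by rw [Finset.sum_const, nsmul_eq_mul]
    _ ≤ 4 / j := by
        rw [mul_one_div, div_le_div_iff₀ h2j hjr]
        exact hcr

lemma primes_sum_le (J : ℕ) :
    ∑ p ∈ (Finset.Icc 1 (2^(J+1))).filter Nat.Prime, (1/p : ℝ)
      ≤ 1 + ∑ j ∈ Finset.Icc 1 J, 4 / (j:ℝ) := by
  induction J with
  | zero =>
    have : (Finset.Icc 1 (2^1)).filter Nat.Prime = {2} := by decide
    rw [this]
    norm_num
  | succ J ih =>
    have hsplit : Finset.Icc 1 (2^(J+1+1)) =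
        Finset.Icc 1 (2^(J+1)) ∪ Finset.Ioc (2^(J+1)) (2^(J+1+1)) := by
      rw [← Finset.coe_inj, Finset.coe_union, Finset.coe_Icc, Finset.coe_Icc, Finset.coe_Ioc,
        Set.Icc_union_Ioc_eq_Icc Nat.one_le_two_pow
          (Nat.pow_le_pow_right (by norm_num) (by omega))]
    have hdisj : Disjoint ((Finset.Icc 1 (2^(J+1))).filter Nat.Prime)
        ((Finset.Ioc (2^(J+1)) (2^(J+1+1))).filter Nat.Prime) := by
      apply Finset.disjoint_filter_filter
      rw [Finset.disjoint_left]
      intro m hm hm'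
      rw [Finset.mem_Icc] at hm
      rw [Finset.mem_Ioc] at hm'
      omega
    rw [hsplit, Finset.filter_union, Finset.sum_union hdisj]
    have hblock := block_sum_le (J+1) (by omega)
    rw [Finset.sum_Icc_succ_top (by omega : 1 ≤ J+1)]
    push_cast at hblock ⊢
    linarith [ih]

lemma sum_inv_primes_le {x : ℝ} (hx : 2 ≤ x) (Q : Finset ℕ)
    (hQ : ∀ p ∈ Q, p.Prime ∧ (p:ℝ) ≤ x) :
    ∑ p ∈ Q, (1/p : ℝ) ≤ 5 + 4 * Real.log (Real.log x / Real.log 2) := by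
  set J := ⌊Real.logb 2 x⌋₊ with hJ
  have hxpos : (0:ℝ) < x := by linarith
  have hlogb1 : 1 ≤ Real.logb 2 x := by
    rw [Real.le_logb_iff_rpow_le (by norm_num) hxpos]
    simpa using hx
  have hJ1 : 1 ≤ J := Nat.le_floor (by exact_mod_cast hlogb1)
  have hxlt : x < 2^(J+1) := by
    have h1 : Real.logb 2 x < J+1 := Nat.lt_floor_add_one _
    have h2 : x = (2:ℝ) ^ (Real.logb 2 x) := (Real.rpow_logb (by norm_num) (by norm_num) hxpos).symm
    calc x = (2:ℝ) ^ (Real.logb 2 x) := h2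
      _ < (2:ℝ) ^ ((J:ℝ)+1) := by
          apply Real.rpow_lt_rpow_left_iff (by norm_num : (1:ℝ) < 2) |>.mpr
          exact_mod_cast h1
      _ = (2:ℝ) ^ (J+1 : ℕ) := by
          rw [← Real.rpow_natCast]
          push_cast
          ring_nf
  have hsub : Q ⊆ (Finset.Icc 1 (2^(J+1))).filter Nat.Prime := by
    intro p hp
    obtain ⟨hprime, hple⟩ := hQ p hp
    rw [Finset.mem_filter, Finset.mem_Icc]
    refine ⟨⟨hprime.one_lt.le, ?_⟩, hprime⟩
    have : (p:ℝ) < ((2^(J+1) : ℕ) : ℝ) := by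
      push_cast
      linarith
    exact_mod_cast this.le
  have hmono : ∑ p ∈ Q, (1/p : ℝ) ≤ ∑ p ∈ (Finset.Icc 1 (2^(J+1))).filter Nat.Prime, (1/p : ℝ) := by
    apply Finset.sum_le_sum_of_subset_of_nonneg hsub
    intro p _ _
    positivity
  have hharm : ∑ j ∈ Finset.Icc 1 J, 4 / (j:ℝ) = 4 * (harmonic J : ℝ) := by
    rw [harmonic_eq_sum_Icc]
    push_cast
    rw [Finset.mul_sum]
    apply Finset.sum_congr rfl
    intro j _
    rw [div_eq_mul_inv]
  have hharm2 : (harmonic J : ℝ) ≤ 1 + Real.log J := harmonic_le_one_add_log J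
  have hlogJ : Real.log J ≤ Real.log (Real.log x / Real.log 2) := by
    apply Real.log_le_log (by exact_mod_cast hJ1)
    rw [Real.logb] at hJ
    calc (J:ℝ) ≤ Real.logb 2 x := Nat.floor_le (by linarith)
      _ = Real.log x / Real.log 2 := rfl
  calc ∑ p ∈ Q, (1/p : ℝ) ≤ ∑ p ∈ (Finset.Icc 1 (2^(J+1))).filter Nat.Prime, (1/p : ℝ) := hmono
    _ ≤ 1 + ∑ j ∈ Finset.Icc 1 J, 4 / (j:ℝ) := primes_sum_le J
    _ = 1 + 4 * (harmonic J : ℝ) := by rw [hharm]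
    _ ≤ 1 + 4 * (1 + Real.log J) := by linarith
    _ ≤ 5 + 4 * Real.log (Real.log x / Real.log 2) := by linarith
open scoped Classical in
noncomputable def Pfin (n : ℕ) : Finset ℕ :=
  (Finset.range (n+1)).filter (fun p => p.Prime ∧ p ≠ 2 ∧ (p:ℝ) ≤ Wp n)

lemma mem_Pfin {n p : ℕ} : p ∈ Pfin n ↔ p < n + 1 ∧ p.Prime ∧ p ≠ 2 ∧ (p:ℝ) ≤ Wp n := by
  classical
  simp [Pfin, Finset.mem_filter, Finset.mem_range]

lemma Pfin_sub_primesLe' {n : ℕ} : (Pfin n : Set ℕ) ⊆ primesLe' n := by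
  intro p hp
  rw [Finset.mem_coe, mem_Pfin] at hp
  exact ⟨⟨hp.2.1, hp.2.2.2⟩, hp.2.2.1⟩

lemma mem_Pfin_of_primesLe' {n p : ℕ} (hW : Wp n ≤ (n:ℝ)) (hp : p ∈ primesLe' n) : p ∈ Pfin n := by
  obtain ⟨⟨hprime, hple⟩, hne2⟩ := hp
  rw [mem_Pfin]
  have : (p:ℝ) ≤ (n:ℝ) := hple.trans hW
  have hpn : p ≤ n := by exact_mod_cast this
  exact ⟨by omega, hprime, hne2, hple⟩

/-- The key subset lemma for `B`. -/
lemma BgeK_subset (n : ℕ) (hW : Wp n ≤ (n:ℝ)) :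
    BgeK n ⊆ ↑(((Pfin n).powersetCard ⌈kp n⌉₊).biUnion
      (fun T => (Finset.Ioc 0 n).filter (fun m => (∏ p ∈ T, p) ∣ m))) := by
  intro m hm
  obtain ⟨⟨hm1, hm2⟩, hm3⟩ := hm
  set Sm := (Pfin n).filter (· ∣ m) with hSm
  have hsub : (↑Sm : Set ℕ) ⊆ primesLe' n := by
    intro p hp
    rw [Finset.mem_coe, hSm, Finset.mem_filter] at hp
    exact Pfin_sub_primesLe' hp.1
  have hmem : m ∈ BSet n ↑Sm := by
    refine ⟨hm1, hm2, fun p hp => ?_⟩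
    constructor
    · intro hdvd
      rw [Finset.mem_coe, hSm, Finset.mem_filter]
      exact ⟨mem_Pfin_of_primesLe' hW hp, hdvd⟩
    · intro hmem
      rw [Finset.mem_coe, hSm, Finset.mem_filter] at hmem
      exact hmem.2
  have hcard : kp n ≤ (Sm.card : ℝ) := by
    by_contra hlt
    push_neg at hlt
    apply hm3
    rw [Set.mem_iUnion₂]
    refine ⟨↑Sm, ⟨hsub, ?_⟩, hmem⟩
    rwa [Set.ncard_coe_finset]
  have hK : ⌈kp n⌉₊ ≤ Sm.card := Nat.ceil_le.mpr hcard
  obtain ⟨T, hTsub, hTcard⟩ := Finset.exists_subset_card_eq hK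
  rw [Finset.mem_coe, Finset.mem_biUnion]
  refine ⟨T, ?_, ?_⟩
  · rw [Finset.mem_powersetCard]
    exact ⟨hTsub.trans (Finset.filter_subset _ _), hTcard⟩
  · rw [Finset.mem_filter, Finset.mem_Ioc]
    refine ⟨⟨hm1, hm2⟩, ?_⟩
    apply Finset.prod_primes_dvd
    · intro p hp
      have := hTsub hp
      rw [hSm, Finset.mem_filter, mem_Pfin] at this
      exact this.1.2.1.prime
    · intro p hp
      have := hTsub hp
      rw [hSm, Finset.mem_filter] at this
      exact this.2

/-- The key subset lemma for `C`. -/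
lemma CgeK_subset (n : ℕ) (hW : Wp n ≤ (n:ℝ)) :
    CgeK n ⊆ ↑(((Pfin n).powersetCard ⌈kp n⌉₊).biUnion
      (fun T => (Finset.Ioc 0 (2*n)).filter (fun m => (∏ p ∈ T, p) ∣ m))) := by
  intro m hm
  obtain ⟨hmo, hm3⟩ := hm
  set Sm := (Pfin n).filter (· ∣ m) with hSm
  have hsub : (↑Sm : Set ℕ) ⊆ primesLe' n := by
    intro p hp
    rw [Finset.mem_coe, hSm, Finset.mem_filter] at hp
    exact Pfin_sub_primesLe' hp.1
  have hmem : m ∈ CSet n ↑Sm := by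
    refine ⟨hmo, fun p hp => ?_⟩
    constructor
    · intro hdvd
      rw [Finset.mem_coe, hSm, Finset.mem_filter]
      exact ⟨mem_Pfin_of_primesLe' hW hp, hdvd⟩
    · intro hmem
      rw [Finset.mem_coe, hSm, Finset.mem_filter] at hmem
      exact hmem.2
  have hcard : kp n ≤ (Sm.card : ℝ) := by
    by_contra hlt
    push_neg at hlt
    apply hm3
    rw [Set.mem_iUnion₂]
    refine ⟨↑Sm, ⟨hsub, ?_⟩, hmem⟩
    rwa [Set.ncard_coe_finset]
  have hK : ⌈kp n⌉₊ ≤ Sm.card := Nat.ceil_le.mpr hcard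
  obtain ⟨T, hTsub, hTcard⟩ := Finset.exists_subset_card_eq hK
  rw [Finset.mem_coe, Finset.mem_biUnion]
  obtain ⟨ho, hlt⟩ := hmo
  have hm1 : 0 < m := by
    rcases Nat.eq_zero_or_pos m with h | h
    · exfalso; rw [h] at ho; exact (Nat.not_odd_iff_even.mpr Even.zero) ho
    · exact h
  refine ⟨T, ?_, ?_⟩
  · rw [Finset.mem_powersetCard]
    exact ⟨hTsub.trans (Finset.filter_subset _ _), hTcard⟩
  · rw [Finset.mem_filter, Finset.mem_Ioc]
    refine ⟨⟨hm1, by omega⟩, ?_⟩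
    apply Finset.prod_primes_dvd
    · intro p hp
      have := hTsub hp
      rw [hSm, Finset.mem_filter, mem_Pfin] at this
      exact this.1.2.1.prime
    · intro p hp
      have := hTsub hp
      rw [hSm, Finset.mem_filter] at this
      exact this.2


lemma biUnion_card_le (n N K : ℕ) :
    ((((Pfin n).powersetCard K).biUnion
      (fun T => (Finset.Ioc 0 N).filter (fun m => (∏ p ∈ T, p) ∣ m))).card : ℝ)
    ≤ (N:ℝ) * ((∑ p ∈ Pfin n, (1/p:ℝ)) ^ K / K.factorial) := by
  have step1 : (((Pfin n).powersetCard K).biUnion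
      (fun T => (Finset.Ioc 0 N).filter (fun m => (∏ p ∈ T, p) ∣ m))).card
      ≤ ∑ T ∈ (Pfin n).powersetCard K,
        ((Finset.Ioc 0 N).filter (fun m => (∏ p ∈ T, p) ∣ m)).card :=
    Finset.card_biUnion_le
  have step2 : ∀ T ∈ (Pfin n).powersetCard K,
      ((((Finset.Ioc 0 N).filter (fun m => (∏ p ∈ T, p) ∣ m)).card : ℝ))
        ≤ (N:ℝ) * ∏ p ∈ T, (1/p : ℝ) := by
    intro T hT
    rw [Finset.mem_powersetCard] at hT
    have hpos : (0:ℝ) < ∏ p ∈ T, (p:ℝ) := by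
      apply Finset.prod_pos
      intro p hp
      have := hT.1 hp
      rw [mem_Pfin] at this
      exact_mod_cast this.2.1.pos
    have hcard : ((Finset.Ioc 0 N).filter (fun m => (∏ p ∈ T, p) ∣ m)).card
        = N / (∏ p ∈ T, p) := Nat.Ioc_filter_dvd_card_eq_div N _
    rw [hcard]
    calc ((N / (∏ p ∈ T, p) : ℕ) : ℝ) ≤ (N:ℝ) / ((∏ p ∈ T, p : ℕ) : ℝ) := Nat.cast_div_le
      _ = (N:ℝ) * ∏ p ∈ T, (1/p : ℝ) := by
          rw [Nat.cast_prod]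
          rw [div_eq_mul_inv, ← Finset.prod_inv_distrib]
          congr 1
          apply Finset.prod_congr rfl
          intro p _
          rw [one_div]
  have step3 : ∑ T ∈ (Pfin n).powersetCard K, ∏ p ∈ T, (1/p : ℝ)
      ≤ (∑ p ∈ Pfin n, (1/p:ℝ)) ^ K / K.factorial := by
    rw [le_div_iff₀ (by positivity : (0:ℝ) < (K.factorial:ℝ))]
    rw [mul_comm]
    exact esymm_bound (Pfin n) (fun p => 1/p) (fun p => by positivity) K
  calc ((((Pfin n).powersetCard K).biUnion
      (fun T => (Finset.Ioc 0 N).filter (fun m => (∏ p ∈ T, p) ∣ m))).card : ℝ)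
      ≤ (∑ T ∈ (Pfin n).powersetCard K,
        ((Finset.Ioc 0 N).filter (fun m => (∏ p ∈ T, p) ∣ m)).card : ℕ) := by exact_mod_cast step1
    _ = ∑ T ∈ (Pfin n).powersetCard K,
        (((Finset.Ioc 0 N).filter (fun m => (∏ p ∈ T, p) ∣ m)).card : ℝ) := by push_cast; rfl
    _ ≤ ∑ T ∈ (Pfin n).powersetCard K, (N:ℝ) * ∏ p ∈ T, (1/p : ℝ) := Finset.sum_le_sum step2
    _ = (N:ℝ) * ∑ T ∈ (Pfin n).powersetCard K, ∏ p ∈ T, (1/p : ℝ) := by rw [Finset.mul_sum]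
    _ ≤ (N:ℝ) * ((∑ p ∈ Pfin n, (1/p:ℝ)) ^ K / K.factorial) := by
        apply mul_le_mul_of_nonneg_left step3 (by positivity)

/-- Core numeric step. -/
lemma core_step (k T U : ℝ) (K : ℕ) (hK : K = ⌈k⌉₊)
    (hk1 : 1 ≤ k)
    (hT0 : 0 ≤ T) (hTU : T ≤ U) (hU1 : 1 ≤ U)
    (hkey : 3 + 2 * Real.log U ≤ (1/2) * Real.log k) :
    2 * (T ^ K / K.factorial) ≤ Real.exp (-(k * Real.log k) * (1/2)) := by
  have hk0 : (0:ℝ) < k := by linarith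
  have hkK : k ≤ (K:ℝ) := hK ▸ Nat.le_ceil k
  have hKk : (K:ℝ) ≤ 2*k := by
    have := Nat.ceil_lt_add_one (le_of_lt hk0)
    rw [← hK] at this
    linarith
  have hfac := pow_self_le_factorial_mul_exp K
  have hK1 : (1:ℝ) ≤ (K:ℝ) := le_trans hk1 hkK
  have hKpos : (0:ℝ) < K := by linarith
  have hfacpos : (0:ℝ) < K.factorial := by positivity
  have hKKpos : (0:ℝ) < (K:ℝ)^K := by positivity
  have hU0 : (0:ℝ) < U := by linarith
  have hlogk0 : 0 ≤ Real.log k := Real.log_nonneg hk1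
  have hlogU0 : 0 ≤ Real.log U := Real.log_nonneg hU1
  have hlogKk : Real.log k ≤ Real.log K := Real.log_le_log hk0 hkK
  have h1 : T ^ K / K.factorial ≤ (Real.exp 1 * U / K) ^ K := by
    have hTK : T ^ K ≤ U ^ K := pow_le_pow_left₀ hT0 hTU K
    have hinv : (1:ℝ) / K.factorial ≤ Real.exp 1 ^ K / (K:ℝ)^K := by
      rw [div_le_div_iff₀ hfacpos hKKpos]
      linarith [hfac]
    calc T ^ K / K.factorial = T ^ K * (1 / K.factorial) := by ring
      _ ≤ U ^ K * (Real.exp 1 ^ K / (K:ℝ)^K) :=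
          mul_le_mul hTK hinv (by positivity) (by positivity)
      _ = (Real.exp 1 * U / K) ^ K := by
          rw [div_pow, mul_pow]
          ring
  have hbase : (0:ℝ) < Real.exp 1 * U / K := by positivity
  have h2 : Real.log (2 * (Real.exp 1 * U / K) ^ K) ≤ -(k * Real.log k) * (1/2) := by
    rw [Real.log_mul (by norm_num) (by positivity), Real.log_pow,
      Real.log_div (by positivity) (by positivity),
      Real.log_mul (Real.exp_ne_zero 1) (by positivity), Real.log_exp]
    have hcneg : 1 + Real.log U - Real.log (K:ℝ) ≤ 0 := by linarith
    have hstep1 : (K:ℝ) * (1 + Real.log U - Real.log (K:ℝ))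
        ≤ (K:ℝ) * (1 + Real.log U - Real.log k) := by
      apply mul_le_mul_of_nonneg_left (by linarith) (by linarith)
    have hcneg2 : 1 + Real.log U - Real.log k ≤ 0 := by linarith
    have hstep2 : (K:ℝ) * (1 + Real.log U - Real.log k)
        ≤ k * (1 + Real.log U - Real.log k) := mul_le_mul_of_nonpos_right hkK hcneg2
    have hlog2 : Real.log 2 < 0.6931471808 := Real.log_two_lt_d9
    have hmul : k * ((1/2) * Real.log k) ≥ k * (3 + 2 * Real.log U) :=
      mul_le_mul_of_nonneg_left hkey (le_of_lt hk0)
    have hklogU : 0 ≤ k * Real.log U := mul_nonneg (le_of_lt hk0) hlogU0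
    nlinarith [hstep1, hstep2, hmul, hklogU]
  calc 2 * (T ^ K / K.factorial) ≤ 2 * (Real.exp 1 * U / K) ^ K := by linarith
    _ = Real.exp (Real.log (2 * (Real.exp 1 * U / K) ^ K)) := by
        rw [Real.exp_log (by positivity)]
    _ ≤ Real.exp (-(k * Real.log k) * (1/2)) := Real.exp_le_exp.mpr h2

lemma main_pointwise (n : ℕ)
    (hL1 : 1 ≤ Real.log n) (hLL40 : (40000:ℝ) ≤ Real.log (Real.log n)) :
    ((BgeK n).ncard : ℝ) ≤ ap n ^ ((1 : ℝ) / 2) * n ∧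
      ((CgeK n).ncard : ℝ) ≤ ap n ^ ((1 : ℝ) / 2) * n := by
  set L : ℝ := Real.log n with hLdef
  set LL : ℝ := Real.log L with hLLdef
  have hLpos : (0:ℝ) < L := lt_of_lt_of_le one_pos hL1
  have hLLpos : (0:ℝ) < LL := lt_of_lt_of_le (by norm_num) hLL40
  have hn1 : (1:ℝ) ≤ (n:ℝ) := by
    by_contra h
    push_neg at h
    have := Real.log_nonpos (Nat.cast_nonneg n) (le_of_lt h)
    rw [← hLdef] at this
    linarith
  have hn0 : (0:ℝ) < (n:ℝ) := lt_of_lt_of_le one_pos hn1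
  have hLLL : LL ≤ L := by
    have := Real.log_le_sub_one_of_pos hLpos
    rw [← hLLdef] at this
    linarith
  have hlogLL0 : 0 ≤ Real.log LL := Real.log_nonneg (by linarith)
  have hsqLL : Real.log LL ≤ LL / 100 := by
    have h1 : Real.log (Real.sqrt LL) ≤ Real.sqrt LL - 1 :=
      Real.log_le_sub_one_of_pos (Real.sqrt_pos.mpr hLLpos)
    rw [Real.log_sqrt hLLpos.le] at h1
    have h200 : (200:ℝ) ≤ Real.sqrt LL := by
      rw [Real.le_sqrt (by norm_num) hLLpos.le]
      nlinarith
    have h2 : Real.sqrt LL ≤ LL / 200 := by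
      rw [le_div_iff₀ (by norm_num : (0:ℝ) < 200)]
      calc Real.sqrt LL * 200 ≤ Real.sqrt LL * Real.sqrt LL :=
            mul_le_mul_of_nonneg_left h200 (Real.sqrt_nonneg LL)
        _ = LL := Real.mul_self_sqrt hLLpos.le
    linarith
  have hLexp : Real.exp LL = L := by rw [hLLdef]; exact Real.exp_log hLpos
  have hLgeLL2 : LL^2/4 ≤ L := by
    have h1 : LL/2 + 1 ≤ Real.exp (LL/2) := Real.add_one_le_exp (LL/2)
    have h2 : Real.exp (LL/2) * Real.exp (LL/2) = Real.exp LL := by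
      rw [← Real.exp_add]; ring_nf
    nlinarith [Real.exp_pos (LL/2)]
  have hc10 : ((2:ℝ)^(-10:ℤ)) = 1/1024 := by norm_num
  have hc5 : ((2:ℝ)^(-5:ℤ)) = 1/32 := by norm_num
  have hWp : Wp n = Real.exp ((2:ℝ)^(-10:ℤ) * Real.sqrt (L * LL)) := by
    rw [hLLdef, hLdef]; rfl
  have hsqrtLLL : Real.sqrt (L * LL) ≤ L := by
    calc Real.sqrt (L * LL) ≤ Real.sqrt (L * L) := Real.sqrt_le_sqrt (by nlinarith)
      _ = L := Real.sqrt_mul_self hLpos.le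
  have hsqrt_ge : LL ≤ Real.sqrt (L * LL) := by
    calc LL = Real.sqrt (LL * LL) := (Real.sqrt_mul_self hLLpos.le).symm
      _ ≤ Real.sqrt (L * LL) := Real.sqrt_le_sqrt (by nlinarith)
  have hsqrt_nonneg : (0:ℝ) ≤ Real.sqrt (L * LL) := Real.sqrt_nonneg _
  have hlogWle : Real.log (Wp n) ≤ L := by
    rw [hWp, Real.log_exp, hc10]
    nlinarith
  have hWn : Wp n ≤ (n:ℝ) := by
    calc Wp n = Real.exp ((2:ℝ)^(-10:ℤ) * Real.sqrt (L * LL)) := hWp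
      _ ≤ Real.exp L := by
          apply Real.exp_le_exp.mpr
          rw [hc10]; nlinarith
      _ = (n:ℝ) := by rw [hLdef]; exact Real.exp_log hn0
  have hlog2lt : Real.log 2 < 0.6931471808 := Real.log_two_lt_d9
  have hlog2gt : (0.6931471803:ℝ) < Real.log 2 := Real.log_two_gt_d9
  have hW2 : (2:ℝ) ≤ Wp n := by
    have h1 : Real.log 2 ≤ (2:ℝ)^(-10:ℤ) * Real.sqrt (L * LL) := by
      rw [hc10]; nlinarith
    calc (2:ℝ) = Real.exp (Real.log 2) := (Real.exp_log two_pos).symm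
      _ ≤ Wp n := by rw [hWp]; exact Real.exp_le_exp.mpr h1
  have hkpdef : kp n = (2:ℝ)^(-5:ℤ) * Real.sqrt (L / LL) := by
    rw [hLLdef, hLdef]; rfl
  have hLdLL : (0:ℝ) < L / LL := div_pos hLpos hLLpos
  have hsq100 : (100:ℝ) ≤ Real.sqrt (L / LL) := by
    rw [Real.le_sqrt (by norm_num) hLdLL.le, le_div_iff₀ hLLpos]
    nlinarith
  have hk1 : 1 ≤ kp n := by rw [hkpdef, hc5]; nlinarith
  have hlogkp : Real.log (kp n) = (LL - Real.log LL)/2 - 5 * Real.log 2 := by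
    rw [hkpdef, Real.log_mul (by rw [hc5]; norm_num)
        (ne_of_gt (Real.sqrt_pos.mpr hLdLL)), Real.log_zpow,
      Real.log_sqrt hLdLL.le, Real.log_div (ne_of_gt hLpos) (ne_of_gt hLLpos), ← hLLdef]
    push_cast
    ring
  have hkey : 3 + 2 * Real.log (LL^2) ≤ (1/2) * Real.log (kp n) := by
    rw [Real.log_pow, hlogkp]
    push_cast
    linarith
  -- bound on the prime reciprocal sum
  have hT : ∑ p ∈ Pfin n, (1/p : ℝ) ≤ LL^2 := by
    have h5 := sum_inv_primes_le hW2 (Pfin n) (fun p hp => by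
      rw [mem_Pfin] at hp; exact ⟨hp.2.1, hp.2.2.2⟩)
    have hlogWpos : (0:ℝ) < Real.log (Wp n) := by
      rw [hWp, Real.log_exp, hc10]
      nlinarith
    have harg : Real.log (Wp n) / Real.log 2 ≤ 2 * L := by
      rw [div_le_iff₀ (by linarith : (0:ℝ) < Real.log 2)]
      nlinarith
    have hargpos : (0:ℝ) < Real.log (Wp n) / Real.log 2 :=
      div_pos hlogWpos (by linarith)
    have h6 : Real.log (Real.log (Wp n) / Real.log 2) ≤ Real.log (2 * L) :=
      Real.log_le_log hargpos harg
    have h7 : Real.log (2 * L) = Real.log 2 + LL := by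
      rw [Real.log_mul (by norm_num) (ne_of_gt hLpos), ← hLLdef]
    nlinarith
  have hT0 : (0:ℝ) ≤ ∑ p ∈ Pfin n, (1/p : ℝ) :=
    Finset.sum_nonneg (fun p _ => by positivity)
  set K := ⌈kp n⌉₊ with hK
  have hcore := core_step (kp n) (∑ p ∈ Pfin n, (1/p : ℝ)) (LL^2) K hK hk1 hT0 hT
    (by nlinarith) hkey
  have hap : ap n ^ ((1:ℝ)/2) = Real.exp (-(kp n * Real.log (kp n)) * (1/2)) := by
    have h1 : ap n = Real.exp (-(kp n * Real.log (kp n))) := rfl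
    rw [h1, ← Real.exp_mul]
  set X : ℝ := (∑ p ∈ Pfin n, (1/p : ℝ)) ^ K / K.factorial with hXdef
  have hX0 : 0 ≤ X := by positivity
  have hXE : X ≤ ap n ^ ((1:ℝ)/2) := by
    rw [hap]; linarith
  have h2XE : 2 * X ≤ ap n ^ ((1:ℝ)/2) := by rw [hap]; linarith
  constructor
  · have hsub := BgeK_subset n hWn
    have h1 : ((BgeK n).ncard : ℝ) ≤
        ((((Pfin n).powersetCard K).biUnion
          (fun T => (Finset.Ioc 0 n).filter (fun m => (∏ p ∈ T, p) ∣ m))).card : ℝ) := by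
      have := Set.ncard_le_ncard hsub (Finset.finite_toSet _)
      rw [Set.ncard_coe_finset] at this
      exact_mod_cast this
    have h2 := biUnion_card_le n n K
    calc ((BgeK n).ncard : ℝ) ≤ (n:ℝ) * X := by rw [hXdef]; linarith
      _ ≤ (n:ℝ) * (ap n ^ ((1:ℝ)/2)) := mul_le_mul_of_nonneg_left hXE hn0.le
      _ = ap n ^ ((1:ℝ)/2) * n := by ring
  · have hsub := CgeK_subset n hWn
    have h1 : ((CgeK n).ncard : ℝ) ≤
        ((((Pfin n).powersetCard K).biUnion
          (fun T => (Finset.Ioc 0 (2*n)).filter (fun m => (∏ p ∈ T, p) ∣ m))).card : ℝ) := by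
      have := Set.ncard_le_ncard hsub (Finset.finite_toSet _)
      rw [Set.ncard_coe_finset] at this
      exact_mod_cast this
    have h2 := biUnion_card_le n (2*n) K
    have hcast : ((2*n : ℕ) : ℝ) = 2 * (n:ℝ) := by push_cast; ring
    calc ((CgeK n).ncard : ℝ) ≤ (2:ℝ) * n * X := by
          rw [hXdef]
          rw [hcast] at h2
          linarith
      _ = (n:ℝ) * (2 * X) := by ring
      _ ≤ (n:ℝ) * (ap n ^ ((1:ℝ)/2)) := mul_le_mul_of_nonneg_left h2XE hn0.le
      _ = ap n ^ ((1:ℝ)/2) * n := by ring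

/-- For all sufficiently large `n`, `|B_{≥k}| ≤ α^{1/2}·n` and `|C_{≥k}| ≤ α^{1/2}·n`. -/
theorem BgeK_CgeK_ncard_le :
    ∃ N : ℕ, ∀ n : ℕ, N ≤ n →
      ((BgeK n).ncard : ℝ) ≤ ap n ^ ((1 : ℝ) / 2) * n ∧
      ((CgeK n).ncard : ℝ) ≤ ap n ^ ((1 : ℝ) / 2) * n := by
  have hL : Tendsto (fun n : ℕ => Real.log n) atTop atTop :=
    Real.tendsto_log_atTop.comp tendsto_natCast_atTop_atTop
  have hLL : Tendsto (fun n : ℕ => Real.log (Real.log n)) atTop atTop :=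
    Real.tendsto_log_atTop.comp hL
  have hev : ∀ᶠ n : ℕ in atTop,
      ((BgeK n).ncard : ℝ) ≤ ap n ^ ((1 : ℝ) / 2) * n ∧
      ((CgeK n).ncard : ℝ) ≤ ap n ^ ((1 : ℝ) / 2) * n := by
    filter_upwards [hL.eventually_ge_atTop 1, hLL.eventually_ge_atTop 40000] with n h1 h2
    exact main_pointwise n h1 h2
  exact eventually_atTop.mp hev
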